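/- Let I = I⟨a_j,φ_j⟩ be a somewhere tall fragmented ideal such that every φ_j is a finitely additive measure on P(a_j). Then I is not gradually fragmented, and the Rothberger number 𝔟(I) equals ℵ₁. -/

import Mathlib

/-!
Tallness of `I ↾ X` bounds the measures of the singletons of `X` by some `c ≥ 1`, while `X ∉ I`
makes `φ i (X ∩ a i)` unbounded. Removing points one at a time therefore cuts, in infinitely many
blocks, any prescribed number of pairwise disjoint pieces of measure in `(c, 2c]`; `l` such pieces
have a union of measure `> l c`, which rules out gradual fragmentation.

For the gap, the block of the pair `(n, k)` receives pieces indexed by a node `s ⊆ {0, …, k - 1}`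
of the binary tree of height `k` and by `i ≤ n`. The `n`-th countable set collects all pieces of
the blocks `(n, ·)`, and a branch `x ⊆ ℕ` collects the `n + 1` pieces at node `x ∩ k` of every block
`(n, k)`; the two meet in at most `n + 1` pieces per block. If `C` separated, uncountably many
branches would leave at most `m` outside `C` in each block, so at level `n = 2m` each of them has a
piece meeting `C` in measure `> c / 2` in every block; a height `k` at which `r` such branches
split gives `r` disjoint such pieces inside the `2m`-th countable set, for every `r`.
Finally, in any ideal a countable orthogonal pair is separated by a diagonal union.
-/

open Set Filter Cardinal

/-- `I` is an ideal on `ω`: contains all finite sets, downward closed, closed under unions. -/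
def IsIdealOn (I : Set (Set ℕ)) : Prop :=
  (∀ x : Set ℕ, x.Finite → x ∈ I) ∧
  (∀ x y : Set ℕ, x ⊆ y → y ∈ I → x ∈ I) ∧
  (∀ x y : Set ℕ, x ∈ I → y ∈ I → x ∪ y ∈ I)

/-- The pair `⟨A, B⟩` is `I`-orthogonal. -/
def IOrthogonal (I A B : Set (Set ℕ)) : Prop := ∀ s ∈ A, ∀ t ∈ B, s ∩ t ∈ I

/-- `C` separates the pair `⟨A, B⟩` with respect to `I`. -/
def ISeparates (I A B : Set (Set ℕ)) (C : Set ℕ) : Prop :=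
  (∀ s ∈ A, s ∩ C ∈ I) ∧ (∀ t ∈ B, t \ C ∈ I)

/-- The pair `⟨A, B⟩` is an `I`-gap. -/
def IsIGap (I A B : Set (Set ℕ)) : Prop :=
  IOrthogonal I A B ∧ ∀ C : Set ℕ, ¬ ISeparates I A B C

/-- There is an `I`-(ω, lam)-gap. -/
def HasOmegaGap (I : Set (Set ℕ)) (lam : Cardinal) : Prop :=
  ∃ A B : Set (Set ℕ), IsIGap I A B ∧ #A = ℵ₀ ∧ #B = lam

/-- `a` is a partition of `ω` into nonempty finite sets. -/
def IsPartitionFin (a : ℕ → Set ℕ) : Prop :=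
  (∀ i, (a i).Nonempty) ∧ (∀ i, (a i).Finite) ∧
  (∀ i j, i ≠ j → Disjoint (a i) (a j)) ∧ (⋃ i, a i) = Set.univ

/-- `φ` is a submeasure on the powerset of the set `s`. -/
def IsSubmeasureOn (s : Set ℕ) (φ : Set ℕ → ℝ) : Prop :=
  φ ∅ = 0 ∧ (∀ x, x ⊆ s → 0 ≤ φ x) ∧
  (∀ x y, x ⊆ y → y ⊆ s → φ x ≤ φ y) ∧
  (∀ x y, x ⊆ s → y ⊆ s → φ (x ∪ y) ≤ φ x + φ y)

/-- `I = I⟨a_i, φ_i⟩` is the fragmented ideal determined by the partition `a`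
and the submeasures `φ`. -/
def IsFragmentation (I : Set (Set ℕ)) (a : ℕ → Set ℕ) (φ : ℕ → Set ℕ → ℝ) : Prop :=
  IsPartitionFin a ∧ (∀ i, IsSubmeasureOn (a i) (φ i)) ∧
  ∀ x : Set ℕ, x ∈ I ↔ ∃ K : ℝ, ∀ i, φ i (x ∩ a i) ≤ K

/-- Gradual fragmentation of `⟨a_i, φ_i⟩`. -/
def GraduallyFragmented (a : ℕ → Set ℕ) (φ : ℕ → Set ℕ → ℝ) : Prop :=
  ∀ k : ℕ, ∃ m : ℕ, ∀ l : ℕ, ∀ᶠ i in atTop,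
    ∀ B : Finset (Set ℕ), (∀ b ∈ B, b ⊆ a i) → B.card ≤ l →
      (∀ b ∈ B, φ i b ≤ (k : ℝ)) → φ i (⋃₀ (↑B : Set (Set ℕ))) ≤ (m : ℝ)

/-- The restriction `I ↾ X` is tall. -/
def IsTallOn (I : Set (Set ℕ)) (X : Set ℕ) : Prop :=
  ∀ Y : Set ℕ, Y ⊆ X → Y.Infinite → ∃ Z, Z ⊆ Y ∧ Z.Infinite ∧ Z ∈ I

def IsTall (I : Set (Set ℕ)) : Prop := IsTallOn I Set.univ

def SomewhereTall (I : Set (Set ℕ)) : Prop := ∃ X : Set ℕ, X ∉ I ∧ IsTallOn I X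

def NowhereTall (I : Set (Set ℕ)) : Prop := ¬ SomewhereTall I

/-- The unbounding number `𝔟`. -/
noncomputable def unboundingNumber : Cardinal :=
  sInf {c | ∃ F : Set (ℕ → ℕ), #F = c ∧
    ∀ g : ℕ → ℕ, ∃ f ∈ F, ¬ ∀ᶠ i in atTop, f i ≤ g i}

/-- The additivity of the Lebesgue-null ideal, `add(N)`. -/
noncomputable def addNull : Cardinal :=
  sInf {c | ∃ F : Set (Set ℝ), #F = c ∧ (∀ s ∈ F, MeasureTheory.volume s = 0) ∧
    MeasureTheory.volume (⋃₀ F) ≠ 0}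

def IsAdditiveOn (s : Set ℕ) (μ : Set ℕ → ℝ) : Prop :=
  ∀ x y, x ⊆ s → y ⊆ s → Disjoint x y → μ (x ∪ y) = μ x + μ y

namespace IsAdditiveOn

variable {s : Set ℕ} {μ : Set ℕ → ℝ}

theorem empty (h : IsAdditiveOn s μ) : μ ∅ = 0 := by
  simpa using h ∅ ∅ (empty_subset s) (empty_subset s) (disjoint_empty ∅)

theorem inter_add_diff (h : IsAdditiveOn s μ) {x : Set ℕ} (hx : x ⊆ s) (C : Set ℕ) :
    μ (x ∩ C) + μ (x \ C) = μ x := by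
  rw [← h _ _ (inter_subset_left.trans hx) (sdiff_subset.trans hx)
    (disjoint_sdiff_right.mono_left inter_subset_right), inter_union_sdiff]

theorem biUnion_finset (h : IsAdditiveOn s μ) {ι : Type*} {T : Finset ι} {q : ι → Set ℕ}
    (hq : ∀ t ∈ T, q t ⊆ s) (hT : (T : Set ι).PairwiseDisjoint q) :
    μ (⋃ t ∈ T, q t) = ∑ t ∈ T, μ (q t) := by
  classical
  induction T using Finset.induction_on with
  | empty => simpa using h.empty
  | insert t T ht ih =>
    rw [Finset.coe_insert, pairwiseDisjoint_insert] at hT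
    have hdisj : Disjoint (q t) (⋃ u ∈ T, q u) :=
      disjoint_iUnion₂_right.2 fun u hu => hT.2 u hu (ne_of_mem_of_not_mem hu ht).symm
    rw [Finset.set_biUnion_insert, Finset.sum_insert ht,
      h _ _ (hq t (Finset.mem_insert_self t T))
        (iUnion₂_subset fun u hu => hq u (Finset.mem_insert_of_mem hu)) hdisj,
      ih (fun u hu => hq u (Finset.mem_insert_of_mem hu)) hT.1]

theorem sum_le (h : IsAdditiveOn s μ) (hμ : IsSubmeasureOn s μ) {ι : Type*} {T : Finset ι}
    {q : ι → Set ℕ} {W : Set ℕ} (hqW : ∀ t ∈ T, q t ⊆ W) (hW : W ⊆ s)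
    (hT : (T : Set ι).PairwiseDisjoint q) : ∑ t ∈ T, μ (q t) ≤ μ W := by
  rw [← h.biUnion_finset (fun t ht => (hqW t ht).trans hW) hT]
  exact hμ.2.2.1 _ _ (iUnion₂_subset hqW) hW

theorem exists_subset_mem_Ioc (h : IsAdditiveOn s μ) {b : Set ℕ} (hb : b.Finite) (hbs : b ⊆ s)
    {c : ℝ} (hc : 0 ≤ c) (hsing : ∀ x ∈ b, μ {x} ≤ c) (hcb : c < μ b) :
    ∃ p ⊆ b, c < μ p ∧ μ p ≤ 2 * c := by
  induction b, hb using Set.Finite.induction_on with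
  | empty => linarith [h.empty]
  | @insert z b hz _ ih =>
    by_cases hle : μ (insert z b) ≤ 2 * c
    · exact ⟨_, subset_rfl, hcb, hle⟩
    have hsplit : μ (insert z b) = μ {z} + μ b := by
      rw [insert_eq]
      exact h _ _ (singleton_subset_iff.2 (hbs (mem_insert z b)))
        ((subset_insert z b).trans hbs) (disjoint_singleton_left.2 hz)
    obtain ⟨p, hpb, hp⟩ := ih ((subset_insert z b).trans hbs)
      (fun x hx => hsing x (mem_insert_of_mem z hx))
      (by linarith [hsing z (mem_insert z b)])
    exact ⟨p, hpb.trans (subset_insert z b), hp⟩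

theorem exists_pairwiseDisjoint_mem_Ioc (h : IsAdditiveOn s μ) {b : Set ℕ} (hb : b.Finite)
    (hbs : b ⊆ s) {c : ℝ} (hc : 0 ≤ c) (hsing : ∀ x ∈ b, μ {x} ≤ c) {ι : Type*}
    (T : Finset ι) (hT : 2 * c * T.card < μ b) :
    ∃ q : ι → Set ℕ, (∀ t, q t ⊆ b) ∧ (∀ t ∈ T, c < μ (q t) ∧ μ (q t) ≤ 2 * c) ∧
      (T : Set ι).PairwiseDisjoint q := by
  classical
  induction T using Finset.induction_on generalizing b with
  | empty => exact ⟨fun _ => ∅, fun _ => empty_subset b, by simp, by simp⟩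
  | insert t T ht ih =>
    rw [Finset.card_insert_of_notMem ht, Nat.cast_succ] at hT
    have hcT : 0 ≤ 2 * c * T.card := by positivity
    obtain ⟨p, hpb, hp⟩ := h.exists_subset_mem_Ioc hb hbs hc hsing (by linarith)
    have hsplit := h.inter_add_diff hbs p
    rw [inter_eq_right.2 hpb] at hsplit
    obtain ⟨q, hqb, hq, hqd⟩ := ih hb.sdiff (sdiff_subset.trans hbs)
      (fun x hx => hsing x hx.1) (by linarith)
    refine ⟨Function.update q t p, fun u => ?_, fun u hu => ?_, ?_⟩
    · rcases eq_or_ne u t with rfl | hut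
      · simpa using hpb
      · simpa [hut] using (hqb u).trans sdiff_subset
    · rcases eq_or_ne u t with rfl | hut
      · simpa using hp
      · simpa [hut] using hq u ((Finset.mem_insert.1 hu).resolve_left hut)
    · rw [Finset.coe_insert, pairwiseDisjoint_insert]
      refine ⟨fun u hu v hv huv => ?_, fun u hu htu => ?_⟩
      · simpa [Function.onFun, ne_of_mem_of_not_mem hu ht, ne_of_mem_of_not_mem hv ht]
          using hqd hu hv huv
      · simpa [htu.symm] using disjoint_sdiff_right.mono_right (hqb u)

end IsAdditiveOn

def IsPieceFamily (a : ℕ → Set ℕ) (φ : ℕ → Set ℕ → ℝ) (c : ℝ) (i : ℕ) {ι : Type*}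
    (T : Finset ι) (q : ι → Set ℕ) : Prop :=
  (∀ t, q t ⊆ a i) ∧ (∀ t ∈ T, c < φ i (q t) ∧ φ i (q t) ≤ 2 * c) ∧
    (T : Set ι).PairwiseDisjoint q

namespace IsIdealOn

variable {I : Set (Set ℕ)}

theorem biUnion_finset_mem (hI : IsIdealOn I) {ι : Type*} (T : Finset ι) {u : ι → Set ℕ}
    (hu : ∀ t ∈ T, u t ∈ I) : (⋃ t ∈ T, u t) ∈ I := by
  classical
  induction T using Finset.induction_on with
  | empty => simpa using hI.1 ∅ finite_empty
  | insert t T _ ih =>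
    rw [Finset.set_biUnion_insert]
    exact hI.2.2 _ _ (hu t (Finset.mem_insert_self t T))
      (ih fun u hu' => hu u (Finset.mem_insert_of_mem hu'))

theorem exists_separates_range (hI : IsIdealOn I) (f g : ℕ → Set ℕ)
    (horth : ∀ i j, f i ∩ g j ∈ I) : ∃ C, ISeparates I (range f) (range g) C := by
  refine ⟨⋃ n, g n \ ⋃ i ∈ Finset.range (n + 1), f i, ?_, ?_⟩
  · rintro _ ⟨j, rfl⟩
    refine hI.2.1 _ _ ?_ (hI.biUnion_finset_mem (Finset.range j) fun n _ => horth j n)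
    rintro z ⟨hzf, hz⟩
    obtain ⟨n, hzg, hzn⟩ := mem_iUnion.1 hz
    refine mem_iUnion₂.2 ⟨n, Finset.mem_range.2 ?_, hzf, hzg⟩
    by_contra! hjn
    exact hzn (mem_iUnion₂.2 ⟨j, Finset.mem_range.2 (Nat.lt_succ_of_le hjn), hzf⟩)
  · rintro _ ⟨j, rfl⟩
    refine hI.2.1 _ _ ?_ (hI.biUnion_finset_mem (Finset.range (j + 1)) fun i _ => horth i j)
    rintro z ⟨hzg, hz⟩
    by_contra hzf
    refine hz (mem_iUnion.2 ⟨j, hzg, fun hzf' => hzf ?_⟩)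
    obtain ⟨i, hi, hzi⟩ := mem_iUnion₂.1 hzf'
    exact mem_iUnion₂.2 ⟨i, hi, hzi, hzg⟩

theorem exists_separates_of_countable (hI : IsIdealOn I) {A B : Set (Set ℕ)}
    (horth : IOrthogonal I A B) (hA : A.Countable) (hB : B.Countable) :
    ∃ C, ISeparates I A B C := by
  have hempty : (∅ : Set ℕ) ∈ I := hI.1 ∅ finite_empty
  obtain ⟨f, hf⟩ := (hA.insert ∅).exists_eq_range (insert_nonempty ∅ A)
  obtain ⟨g, hg⟩ := (hB.insert ∅).exists_eq_range (insert_nonempty ∅ B)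
  have horth' : ∀ i j, f i ∩ g j ∈ I := by
    intro i j
    obtain hs | hs := (hf ▸ mem_range_self i : f i ∈ insert ∅ A)
    · simpa [hs] using hempty
    obtain ht | ht := (hg ▸ mem_range_self j : g j ∈ insert ∅ B)
    · simpa [ht] using hempty
    exact horth _ hs _ ht
  obtain ⟨C, hCA, hCB⟩ := hI.exists_separates_range f g horth'
  exact ⟨C, fun s hs => hCA s (hf ▸ mem_insert_of_mem ∅ hs),
    fun t ht => hCB t (hg ▸ mem_insert_of_mem ∅ ht)⟩

theorem aleph_one_le_of_hasOmegaGap (hI : IsIdealOn I) {lam : Cardinal}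
    (h : HasOmegaGap I lam) : aleph 1 ≤ lam := by
  obtain ⟨A, B, ⟨horth, hnosep⟩, hA, hB⟩ := h
  rw [aleph_one_le_iff, ← hB]
  by_contra! hBc
  obtain ⟨C, hC⟩ := hI.exists_separates_of_countable horth
    (le_aleph0_iff_set_countable.1 hA.le) (le_aleph0_iff_set_countable.1 hBc)
  exact hnosep C hC

end IsIdealOn

namespace IsFragmentation

variable {I : Set (Set ℕ)} {a : ℕ → Set ℕ} {φ : ℕ → Set ℕ → ℝ}

theorem mem_iff (hfrag : IsFragmentation I a φ) {x : Set ℕ} :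
    x ∈ I ↔ ∃ K, ∀ i, φ i (x ∩ a i) ≤ K :=
  hfrag.2.2 x

theorem submeasure (hfrag : IsFragmentation I a φ) (i : ℕ) : IsSubmeasureOn (a i) (φ i) :=
  hfrag.2.1 i

theorem finite (hfrag : IsFragmentation I a φ) (i : ℕ) : (a i).Finite :=
  hfrag.1.2.1 i

theorem mono (hfrag : IsFragmentation I a φ) {i : ℕ} {x y : Set ℕ} (hxy : x ⊆ y)
    (hy : y ⊆ a i) : φ i x ≤ φ i y :=
  (hfrag.submeasure i).2.2.1 x y hxy hy

theorem eq_of_mem (hfrag : IsFragmentation I a φ) {z i j : ℕ} (hi : z ∈ a i) (hj : z ∈ a j) :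
    i = j := by
  by_contra hij
  exact (hfrag.1.2.2.1 i j hij).ne_of_mem hi hj rfl

theorem mem_of_subset (hfrag : IsFragmentation I a φ) {x y : Set ℕ} (hxy : x ⊆ y)
    (hy : y ∈ I) : x ∈ I := by
  obtain ⟨K, hK⟩ := hfrag.mem_iff.1 hy
  exact hfrag.mem_iff.2 ⟨K, fun i =>
    (hfrag.mono (inter_subset_inter_left _ hxy) inter_subset_right).trans (hK i)⟩

theorem union_mem (hfrag : IsFragmentation I a φ) {x y : Set ℕ} (hx : x ∈ I) (hy : y ∈ I) :
    x ∪ y ∈ I := by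
  obtain ⟨K, hK⟩ := hfrag.mem_iff.1 hx
  obtain ⟨L, hL⟩ := hfrag.mem_iff.1 hy
  refine hfrag.mem_iff.2 ⟨K + L, fun i => ?_⟩
  rw [union_inter_distrib_right]
  exact ((hfrag.submeasure i).2.2.2 _ _ inter_subset_right inter_subset_right).trans
    (add_le_add (hK i) (hL i))

theorem singleton_mem (hfrag : IsFragmentation I a φ) (z : ℕ) : {z} ∈ I := by
  obtain ⟨j, hj⟩ := mem_iUnion.1 (hfrag.1.2.2.2.symm ▸ mem_univ z : z ∈ ⋃ i, a i)
  refine hfrag.mem_iff.2 ⟨φ j {z}, fun i => ?_⟩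
  by_cases hi : z ∈ a i
  · rw [hfrag.eq_of_mem hi hj, inter_eq_left.2 (singleton_subset_iff.2 hj)]
  · rw [singleton_inter_eq_empty.2 hi, (hfrag.submeasure i).1]
    exact (hfrag.submeasure j).2.1 _ (singleton_subset_iff.2 hj)

theorem finite_mem (hfrag : IsFragmentation I a φ) {x : Set ℕ} (hx : x.Finite) : x ∈ I := by
  induction x, hx using Set.Finite.induction_on with
  | empty => exact hfrag.mem_of_subset (empty_subset _) (hfrag.singleton_mem 0)
  | @insert z x _ _ ih => exact insert_eq z x ▸ hfrag.union_mem (hfrag.singleton_mem z) ih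

theorem isIdealOn (hfrag : IsFragmentation I a φ) : IsIdealOn I :=
  ⟨fun _ => hfrag.finite_mem, fun _ _ => hfrag.mem_of_subset, fun _ _ => hfrag.union_mem⟩

theorem frequently_lt_of_notMem (hfrag : IsFragmentation I a φ) {X : Set ℕ} (hX : X ∉ I)
    (K : ℝ) : ∃ᶠ i in atTop, K < φ i (X ∩ a i) := by
  contrapose! hX
  obtain ⟨N, hN⟩ := eventually_atTop.1 hX
  refine hfrag.mem_iff.2 ⟨max K (∑ i ∈ Finset.range N, φ i (X ∩ a i)), fun i => ?_⟩
  rcases lt_or_ge i N with hiN | hiN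
  · refine le_max_of_le_right (Finset.single_le_sum (f := fun j => φ j (X ∩ a j))
      (fun j _ => (hfrag.submeasure j).2.1 _ inter_subset_right) (Finset.mem_range.2 hiN))
  · exact le_max_of_le_left (hN i hiN)

theorem exists_singleton_le_of_isTallOn (hfrag : IsFragmentation I a φ) {X : Set ℕ}
    (htall : IsTallOn I X) : ∃ c, ∀ i, ∀ x ∈ X ∩ a i, φ i {x} ≤ c := by
  by_contra! hunb
  choose blk pt hpt hbig using fun m : ℕ => hunb m
  have hbound : ∀ W ∈ I, ∃ K : ℝ, ∀ m, pt m ∈ W → (m : ℝ) < K := by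
    intro W hW
    obtain ⟨K, hK⟩ := hfrag.mem_iff.1 hW
    exact ⟨K, fun m hm => (hbig m).trans_le <|
      (hfrag.mono (singleton_subset_iff.2 (mem_inter hm (hpt m).2)) inter_subset_right).trans
        (hK _)⟩
  have hinf : (range pt).Infinite := fun hfin => by
    obtain ⟨K, hK⟩ := hbound _ (hfrag.finite_mem hfin)
    exact (hK ⌈K⌉₊ (mem_range_self _)).not_ge (Nat.le_ceil K)
  obtain ⟨Z, hZ, hZinf, hZI⟩ := htall _ (range_subset_iff.2 fun m => (hpt m).1) hinf
  obtain ⟨K, hK⟩ := hbound Z hZI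
  refine hZinf (((finite_Iio ⌈K⌉₊).image pt).subset fun z hz => ?_)
  obtain ⟨m, rfl⟩ := hZ hz
  exact ⟨m, Nat.cast_lt.1 ((hK m hz).trans_le (Nat.le_ceil K)), rfl⟩

theorem iUnion_inter_subset (hfrag : IsFragmentation I a φ) {ι : Type*} {col : ι → ℕ}
    (hcol : Function.Injective col) {Y : ι → Set ℕ} (hY : ∀ j, Y j ⊆ a (col j)) (j : ι) :
    (⋃ j, Y j) ∩ a (col j) ⊆ Y j := by
  rintro z ⟨hz, hza⟩
  obtain ⟨j', hj'⟩ := mem_iUnion.1 hz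
  rwa [hcol (hfrag.eq_of_mem (hY j' hj') hza)] at hj'

theorem iUnion_mem (hfrag : IsFragmentation I a φ) {ι : Type*} {col : ι → ℕ}
    (hcol : Function.Injective col) {Y : ι → Set ℕ} (hY : ∀ j, Y j ⊆ a (col j)) {K : ℝ}
    (hK : ∀ j, φ (col j) (Y j) ≤ K) : (⋃ j, Y j) ∈ I := by
  refine hfrag.mem_iff.2 ⟨max K 0, fun i => ?_⟩
  by_cases hi : i ∈ range col
  · obtain ⟨j, rfl⟩ := hi
    exact (hfrag.mono (hfrag.iUnion_inter_subset hcol hY j) (hY j)).trans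
      ((hK j).trans (le_max_left K 0))
  · have hempty : (⋃ j, Y j) ∩ a i = ∅ := by
      refine eq_empty_of_forall_notMem fun z ⟨hz, hza⟩ => ?_
      obtain ⟨j, hj⟩ := mem_iUnion.1 hz
      exact hi ⟨j, hfrag.eq_of_mem (hY j hj) hza⟩
    rw [hempty, (hfrag.submeasure i).1]
    exact le_max_right K 0

theorem exists_frequently_isPieceFamily (hfrag : IsFragmentation I a φ)
    (hadd : ∀ i, IsAdditiveOn (a i) (φ i)) {X : Set ℕ} (hX : X ∉ I) (htall : IsTallOn I X) :
    ∃ c, 1 ≤ c ∧ ∀ {ι : Type} (T : Finset ι), ∃ᶠ i in atTop, ∃ q, IsPieceFamily a φ c i T q := by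
  obtain ⟨c, hc⟩ := hfrag.exists_singleton_le_of_isTallOn htall
  refine ⟨max c 1, le_max_right c 1, fun T => ?_⟩
  refine (hfrag.frequently_lt_of_notMem hX (2 * max c 1 * T.card)).mono fun i hi => ?_
  obtain ⟨q, hqX, hq⟩ := (hadd i).exists_pairwiseDisjoint_mem_Ioc
    ((hfrag.finite i).subset inter_subset_right) inter_subset_right (by positivity)
    (fun x hx => (hc i x hx).trans (le_max_left c 1)) T hi
  exact ⟨q, fun t => (hqX t).trans inter_subset_right, hq⟩

end IsFragmentation

theorem not_graduallyFragmented {a : ℕ → Set ℕ} {φ : ℕ → Set ℕ → ℝ}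
    (hadd : ∀ i, IsAdditiveOn (a i) (φ i)) {c : ℝ} (hc : 1 ≤ c)
    (hpieces : ∀ {ι : Type} (T : Finset ι), ∃ᶠ i in atTop, ∃ q, IsPieceFamily a φ c i T q) :
    ¬ GraduallyFragmented a φ := by
  intro hgf
  obtain ⟨m, hm⟩ := hgf ⌈2 * c⌉₊
  obtain ⟨i, ⟨q, hqa, hq, hqd⟩, hi⟩ :=
    ((hpieces (Finset.range (m + 1))).and_eventually (hm (m + 1))).exists
  have hunion := hi ((Finset.range (m + 1)).image q)
    (by simpa using fun t _ => hqa t) (Finset.card_image_le.trans (Finset.card_range _).le)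
    (by simpa using fun t ht => (hq t ht).2.trans (Nat.le_ceil _))
  rw [Finset.coe_image, sUnion_image, Finset.set_biUnion_coe,
    (hadd i).biUnion_finset (fun t _ => hqa t) hqd] at hunion
  have hsum := Finset.card_nsmul_le_sum _ _ c fun t ht => (hq t ht).1.le
  rw [Finset.card_range, nsmul_eq_mul, Nat.cast_succ] at hsum
  nlinarith

theorem Set.exists_infinite_setOf_le_of_not_countable {α : Type*} {R : Set α}
    (hR : ¬R.Countable) (β : α → ℝ) : ∃ m : ℕ, {x ∈ R | β x ≤ m}.Infinite := by
  by_contra! hfin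
  have hcover : R ⊆ ⋃ m : ℕ, {x ∈ R | β x ≤ m} :=
    fun x hx => mem_iUnion.2 ⟨⌈β x⌉₊, hx, Nat.le_ceil _⟩
  exact hR ((countable_iUnion fun m => (hfin m).countable).mono hcover)

open Classical in
noncomputable def truncate (x : Set ℕ) (k : ℕ) : Finset ℕ := (Finset.range k).filter (· ∈ x)

theorem truncate_mem_powerset (x : Set ℕ) (k : ℕ) :
    truncate x k ∈ (Finset.range k).powerset := by
  classical
  exact Finset.mem_powerset.2 (Finset.filter_subset _ _)

theorem eventually_truncate_ne {x y : Set ℕ} (hxy : x ≠ y) :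
    ∀ᶠ k in atTop, truncate x k ≠ truncate y k := by
  obtain ⟨j, hj⟩ : ∃ j, ¬(j ∈ x ↔ j ∈ y) := by
    by_contra! h
    exact hxy (Set.ext h)
  refine eventually_atTop.2 ⟨j + 1, fun k hk he => hj ?_⟩
  simpa [truncate, Nat.lt_of_succ_le hk] using congrArg (j ∈ ·) he

theorem exists_truncate_injOn (F : Finset (Set ℕ)) : ∃ k, Set.InjOn (truncate · k) F := by
  obtain ⟨k, hk⟩ := (F.offDiag.eventually_all.2 fun p hp =>
    eventually_truncate_ne (Finset.mem_offDiag.1 hp).2.2).exists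
  exact ⟨k, fun x hx y hy hxy =>
    by_contra fun hne => hk (x, y) (Finset.mem_offDiag.2 ⟨hx, hy, hne⟩) hxy⟩

def gapIndex (j : ℕ × ℕ) : Finset (Finset ℕ × ℕ) :=
  (Finset.range j.2).powerset ×ˢ Finset.range (j.1 + 1)

theorem truncate_mem_gapIndex (x : Set ℕ) (j : ℕ × ℕ) {i : ℕ} (hi : i < j.1 + 1) :
    (truncate x j.2, i) ∈ gapIndex j :=
  Finset.mem_product.2 ⟨truncate_mem_powerset x j.2, Finset.mem_range.2 hi⟩

structure GapSkeleton (a : ℕ → Set ℕ) (φ : ℕ → Set ℕ → ℝ) (c : ℝ) where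
  col : ℕ × ℕ → ℕ
  piece : ℕ × ℕ → Finset ℕ × ℕ → Set ℕ
  col_injective : Function.Injective col
  isPieceFamily : ∀ j, IsPieceFamily a φ c (col j) (gapIndex j) (piece j)

theorem GapSkeleton.nonempty {a : ℕ → Set ℕ} {φ : ℕ → Set ℕ → ℝ} {c : ℝ}
    (hpieces : ∀ {ι : Type} (T : Finset ι), ∃ᶠ i in atTop, ∃ q, IsPieceFamily a φ c i T q) :
    Nonempty (GapSkeleton a φ c) := by
  obtain ⟨g, hg, hq⟩ :=
    extraction_forall_of_frequently fun m => hpieces (gapIndex (Nat.pairEquiv.symm m))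
  choose q hq using hq
  exact ⟨{ col := fun j => g (Nat.pairEquiv j)
           piece := fun j => q (Nat.pairEquiv j)
           col_injective := hg.injective.comp Nat.pairEquiv.injective
           isPieceFamily := fun j => by
             simpa only [Equiv.symm_apply_apply] using hq (Nat.pairEquiv j) }⟩

namespace GapSkeleton

variable {I : Set (Set ℕ)} {a : ℕ → Set ℕ} {φ : ℕ → Set ℕ → ℝ} {c : ℝ}
  (S : GapSkeleton a φ c)

def countableSide (n : ℕ) : Set ℕ := ⋃ k, ⋃ π ∈ gapIndex (n, k), S.piece (n, k) π

def branchBlock (x : Set ℕ) (j : ℕ × ℕ) : Set ℕ :=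
  ⋃ i ∈ Finset.range (j.1 + 1), S.piece j (truncate x j.2, i)

def branchSide (x : Set ℕ) : Set ℕ := ⋃ j, S.branchBlock x j

theorem piece_subset (j : ℕ × ℕ) (π : Finset ℕ × ℕ) : S.piece j π ⊆ a (S.col j) :=
  (S.isPieceFamily j).1 π

theorem piece_nonempty (hfrag : IsFragmentation I a φ) (hc : 0 ≤ c) {j : ℕ × ℕ}
    {π : Finset ℕ × ℕ} (hπ : π ∈ gapIndex j) : (S.piece j π).Nonempty := by
  refine nonempty_iff_ne_empty.2 fun hempty => ?_
  have := ((S.isPieceFamily j).2.1 π hπ).1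
  rw [hempty, (hfrag.submeasure _).1] at this
  linarith

theorem disjoint_piece {j : ℕ × ℕ} {π π' : Finset ℕ × ℕ} (hπ : π ∈ gapIndex j)
    (hπ' : π' ∈ gapIndex j) (hne : π ≠ π') : Disjoint (S.piece j π) (S.piece j π') :=
  (S.isPieceFamily j).2.2 hπ hπ' hne

theorem branchBlock_subset (x : Set ℕ) (j : ℕ × ℕ) : S.branchBlock x j ⊆ a (S.col j) :=
  iUnion₂_subset fun _ _ => S.piece_subset j _

theorem subset_branchSide (x : Set ℕ) (j : ℕ × ℕ) {i : ℕ} (hi : i < j.1 + 1) :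
    S.piece j (truncate x j.2, i) ⊆ S.branchSide x :=
  subset_iUnion_of_subset j (subset_iUnion₂_of_subset i (Finset.mem_range.2 hi) subset_rfl)

theorem measure_branchBlock_le (hadd : ∀ i, IsAdditiveOn (a i) (φ i)) (x : Set ℕ)
    (j : ℕ × ℕ) : φ (S.col j) (S.branchBlock x j) ≤ 2 * c * (j.1 + 1) := by
  rw [branchBlock, (hadd _).biUnion_finset (fun i _ => S.piece_subset j _)
    fun i hi i' hi' hii' => S.disjoint_piece (truncate_mem_gapIndex x j (Finset.mem_range.1 hi))
      (truncate_mem_gapIndex x j (Finset.mem_range.1 hi')) (by simpa using hii')]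
  refine (Finset.sum_le_card_nsmul _ _ (2 * c) fun i hi =>
    ((S.isPieceFamily j).2.1 _ (truncate_mem_gapIndex x j (Finset.mem_range.1 hi))).2).trans ?_
  simp [mul_comm]

theorem countableSide_inter_branchSide_mem (hfrag : IsFragmentation I a φ)
    (hadd : ∀ i, IsAdditiveOn (a i) (φ i)) (n : ℕ) (x : Set ℕ) :
    S.countableSide n ∩ S.branchSide x ∈ I := by
  refine hfrag.mem_of_subset (fun z ⟨hz, hzx⟩ => ?_) (hfrag.iUnion_mem
    (col := fun k => S.col (n, k)) (K := 2 * c * (n + 1))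
    (S.col_injective.comp (Prod.mk_right_injective n)) (fun k => S.branchBlock_subset x (n, k))
    fun k => S.measure_branchBlock_le hadd x (n, k))
  obtain ⟨k, π, -, hzπ⟩ : ∃ k, ∃ π ∈ gapIndex (n, k), z ∈ S.piece (n, k) π := by
    simpa [countableSide] using hz
  exact mem_iUnion.2 ⟨k, hfrag.iUnion_inter_subset S.col_injective (S.branchBlock_subset x)
    (n, k) ⟨hzx, S.piece_subset _ _ hzπ⟩⟩

theorem countableSide_injective (hfrag : IsFragmentation I a φ) (hc : 0 ≤ c) :
    Function.Injective S.countableSide := by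
  intro n n' h
  obtain ⟨z, hz⟩ := S.piece_nonempty hfrag hc (truncate_mem_gapIndex ∅ (n, 0) n.succ_pos)
  have hz' : z ∈ S.countableSide n' :=
    h ▸ mem_iUnion.2 ⟨0, mem_iUnion₂.2 ⟨_, truncate_mem_gapIndex ∅ (n, 0) n.succ_pos, hz⟩⟩
  obtain ⟨k, π, -, hzπ⟩ : ∃ k, ∃ π ∈ gapIndex (n', k), z ∈ S.piece (n', k) π := by
    simpa [countableSide] using hz'
  exact (Prod.ext_iff.1 (S.col_injective
    (hfrag.eq_of_mem (S.piece_subset _ _ hz) (S.piece_subset _ _ hzπ)))).1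

theorem branchSide_injective (hfrag : IsFragmentation I a φ) (hc : 0 ≤ c) :
    Function.Injective S.branchSide := by
  intro x y h
  by_contra hxy
  obtain ⟨k, hk⟩ := (eventually_truncate_ne hxy).exists
  have hx := truncate_mem_gapIndex x (0, k) Nat.one_pos
  obtain ⟨z, hz⟩ := S.piece_nonempty hfrag hc hx
  have hzy' : z ∈ S.branchSide y := h ▸ S.subset_branchSide x (0, k) Nat.one_pos hz
  have hzy : z ∈ S.branchBlock y (0, k) :=
    hfrag.iUnion_inter_subset S.col_injective (S.branchBlock_subset y) (0, k)
      ⟨hzy', S.piece_subset _ _ hz⟩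
  obtain ⟨i, hi, hzi⟩ := mem_iUnion₂.1 hzy
  obtain rfl : i = 0 := by simpa using hi
  exact S.disjoint_piece hx (truncate_mem_gapIndex y (0, k) Nat.one_pos) (by simpa using hk)
    |>.ne_of_mem hz hzi rfl

theorem exists_piece_inter_gt (hfrag : IsFragmentation I a φ)
    (hadd : ∀ i, IsAdditiveOn (a i) (φ i)) {x C : Set ℕ} {β : ℝ}
    (hβ : ∀ i, φ i ((S.branchSide x \ C) ∩ a i) ≤ β) {j : ℕ × ℕ} (hj : 2 * β < (j.1 + 1) * c) :
    ∃ i < j.1 + 1, c / 2 < φ (S.col j) (S.piece j (truncate x j.2, i) ∩ C) := by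
  by_contra! hsmall
  have hmem : ∀ i ∈ Finset.range (j.1 + 1), (truncate x j.2, i) ∈ gapIndex j :=
    fun i hi => truncate_mem_gapIndex x j (Finset.mem_range.1 hi)
  have hsum : ∑ i ∈ Finset.range (j.1 + 1), φ (S.col j) (S.piece j (truncate x j.2, i) \ C) ≤ β :=
    ((hadd _).sum_le (hfrag.submeasure _) (W := (S.branchSide x \ C) ∩ a (S.col j))
      (fun i hi z hz => ⟨⟨S.subset_branchSide x j (Finset.mem_range.1 hi) hz.1, hz.2⟩,
        S.piece_subset _ _ hz.1⟩) inter_subset_right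
      fun i hi i' hi' hii' => (S.disjoint_piece (hmem i hi) (hmem i' hi')
        (by simpa using hii')).mono sdiff_subset sdiff_subset).trans (hβ _)
  have hlarge : ∀ i ∈ Finset.range (j.1 + 1),
      c / 2 ≤ φ (S.col j) (S.piece j (truncate x j.2, i) \ C) := by
    intro i hi
    have := (hadd _).inter_add_diff (S.piece_subset j (truncate x j.2, i)) C
    linarith [((S.isPieceFamily j).2.1 _ (hmem i hi)).1, hsmall i (Finset.mem_range.1 hi)]
  have := (Finset.card_nsmul_le_sum _ _ _ hlarge).trans hsum
  rw [Finset.card_range, nsmul_eq_mul, Nat.cast_succ] at this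
  linarith

theorem card_mul_le_of_piece_inter_gt (hfrag : IsFragmentation I a φ)
    (hadd : ∀ i, IsAdditiveOn (a i) (φ i)) {n k : ℕ} {C : Set ℕ} {K : ℝ}
    (hK : ∀ i, φ i ((S.countableSide n ∩ C) ∩ a i) ≤ K) {F : Finset (Set ℕ)}
    (hF : Set.InjOn (truncate · k) F)
    (hlarge : ∀ x ∈ F, ∃ i < n + 1,
      c / 2 < φ (S.col (n, k)) (S.piece (n, k) (truncate x k, i) ∩ C)) :
    F.card * (c / 2) ≤ K := by
  choose! ι hι hιC using hlarge
  have hmem : ∀ x ∈ F, (truncate x k, ι x) ∈ gapIndex (n, k) :=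
    fun x hx => truncate_mem_gapIndex x (n, k) (hι x hx)
  have hsum : ∑ x ∈ F, φ (S.col (n, k)) (S.piece (n, k) (truncate x k, ι x) ∩ C) ≤ K :=
    ((hadd _).sum_le (hfrag.submeasure _) (W := (S.countableSide n ∩ C) ∩ a (S.col (n, k)))
      (fun x hx z hz => ⟨⟨mem_iUnion.2 ⟨k, mem_iUnion₂.2 ⟨_, hmem x hx, hz.1⟩⟩, hz.2⟩,
        S.piece_subset _ _ hz.1⟩) inter_subset_right
      fun x hx y hy hxy => (S.disjoint_piece (hmem x hx) (hmem y hy)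
        fun he => hxy (hF hx hy (Prod.ext_iff.1 he).1)).mono inter_subset_left
          inter_subset_left).trans (hK _)
  simpa using (Finset.card_nsmul_le_sum _ _ _ fun x hx => (hιC x hx).le).trans hsum

theorem not_separates (hfrag : IsFragmentation I a φ) (hadd : ∀ i, IsAdditiveOn (a i) (φ i))
    (hc : 1 ≤ c) {R : Set (Set ℕ)} (hR : ¬R.Countable) (C : Set ℕ) :
    ¬ISeparates I (range S.countableSide) (S.branchSide '' R) C := by
  rintro ⟨hA, hB⟩
  choose! β hβ using fun x (hx : x ∈ R) => hfrag.mem_iff.1 (hB _ (mem_image_of_mem _ hx))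
  obtain ⟨m, hm⟩ := Set.exists_infinite_setOf_le_of_not_countable hR β
  obtain ⟨K, hK⟩ := hfrag.mem_iff.1 (hA _ (mem_range_self (2 * m)))
  obtain ⟨F, hFm, hFcard⟩ := hm.exists_subset_card_eq (2 * ⌈K⌉₊ + 2)
  obtain ⟨k, hk⟩ := exists_truncate_injOn F
  have hcount := S.card_mul_le_of_piece_inter_gt hfrag hadd hK hk fun x hx =>
    S.exists_piece_inter_gt hfrag hadd (hβ x (hFm hx).1) (j := (2 * m, k)) (by
      have := (hFm hx).2
      push_cast
      nlinarith)
  rw [hFcard] at hcount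
  push_cast at hcount
  nlinarith [Nat.le_ceil K]

end GapSkeleton

theorem IsFragmentation.hasOmegaGap_aleph_one {I : Set (Set ℕ)} {a : ℕ → Set ℕ}
    {φ : ℕ → Set ℕ → ℝ} (hfrag : IsFragmentation I a φ) (hadd : ∀ i, IsAdditiveOn (a i) (φ i))
    {c : ℝ} (hc : 1 ≤ c) (S : GapSkeleton a φ c) : HasOmegaGap I (aleph 1) := by
  obtain ⟨R, hR⟩ := Cardinal.le_mk_iff_exists_set.1
    (by simpa using aleph_one_le_continuum : aleph 1 ≤ #(Set ℕ))
  have hRc : ¬R.Countable := by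
    rw [← le_aleph0_iff_set_countable, hR, ← lt_aleph_one_iff]
    exact lt_irrefl _
  refine ⟨range S.countableSide, S.branchSide '' R,
    ⟨?_, fun C => S.not_separates hfrag hadd hc hRc C⟩, ?_, ?_⟩
  · rintro _ ⟨n, rfl⟩ _ ⟨x, -, rfl⟩
    exact S.countableSide_inter_branchSide_mem hfrag hadd n x
  · rw [mk_range_eq _ (S.countableSide_injective hfrag (by linarith)), mk_nat]
  · rw [mk_image_eq (S.branchSide_injective hfrag (by linarith)), hR]

/-- If `I = I⟨a_j, φ_j⟩` is a somewhere tall fragmented ideal all of whose submeasures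
`φ_j` are finitely additive measures on `P(a_j)`, then `I` is not gradually fragmented
and the Rothberger number `𝔟(I)` equals `ℵ₁`. -/
theorem rothberger_measure_somewhere_tall_eq_aleph_one
    (a : ℕ → Set ℕ) (φ : ℕ → Set ℕ → ℝ) (I : Set (Set ℕ))
    (hfrag : IsFragmentation I a φ)
    (hst : SomewhereTall I)
    (hmeasure : ∀ j, ∀ x y : Set ℕ, x ⊆ a j → y ⊆ a j → Disjoint x y →
      φ j (x ∪ y) = φ j x + φ j y) :
    ¬ GraduallyFragmented a φ ∧
    HasOmegaGap I (aleph 1) ∧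
    ∀ lam : Cardinal, HasOmegaGap I lam → aleph 1 ≤ lam := by
  obtain ⟨X, hX, htall⟩ := hst
  obtain ⟨c, hc, hpieces⟩ := hfrag.exists_frequently_isPieceFamily hmeasure hX htall
  obtain ⟨S⟩ := GapSkeleton.nonempty hpieces
  exact ⟨not_graduallyFragmented hmeasure hc hpieces, hfrag.hasOmegaGap_aleph_one hmeasure hc S,
    fun _ => hfrag.isIdealOn.aleph_one_le_of_hasOmegaGap⟩
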